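/- There exists a constant C > 0, depending only on H, such that for every integer n ≥ 1 and every t ∈ [0,1], ∫₀¹ (ΔK̃(t,r))² dr ≤ C (n^{−2H} + ε(t)²). -/

import Mathlib

open MeasureTheory intervalIntegral
open scoped Classical
set_option maxHeartbeats 4000000

/-- Grid projection `η(t) = ⌊nt⌋/n`. -/
noncomputable def gridEta (n : ℕ) (t : ℝ) : ℝ := (⌊(n : ℝ) * t⌋ : ℝ) / n

/-- Positive-part fractional power `x₊^(H-1/2)`. -/
noncomputable def posPow (H x : ℝ) : ℝ := if 0 < x then x ^ (H - 1/2) else 0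

/-- The symmetrized fractional kernel `K̃(t,r) = |t-r|^(H-1/2)`. -/
noncomputable def symK (H t r : ℝ) : ℝ := |t - r| ^ (H - 1/2)

/-- The discretized symmetrized kernel `K̃'(t,r) = (η(t)-r)₊^(H-1/2) + (η(r)-t)₊^(H-1/2)`. -/
noncomputable def symK' (H : ℝ) (n : ℕ) (t r : ℝ) : ℝ :=
  posPow H (gridEta n t - r) + posPow H (gridEta n r - t)

/-- `ΔK̃ = K̃' - K̃`. -/
noncomputable def deltaSymK (H : ℝ) (n : ℕ) (t r : ℝ) : ℝ := symK' H n t r - symK H t r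

/-- `ε(t) = n^(-1/2) (⌈nt⌉/n - t)^(H-1/2)` when `nt ∉ ℤ`, and `ε(t) = 0` when `nt ∈ ℤ`. -/
noncomputable def epsFn (H : ℝ) (n : ℕ) (t : ℝ) : ℝ :=
  if ∃ m : ℤ, (n : ℝ) * t = m then 0
  else (n : ℝ) ^ (-(1/2) : ℝ) * ((⌈(n : ℝ) * t⌉ : ℝ) / n - t) ^ (H - 1/2)

private lemma rpow_sq_eq {x : ℝ} (hx : 0 < x) (β : ℝ) : (x ^ β)^2 = x ^ (2*β) := by
  rw [sq, ← Real.rpow_add hx]; ring_nf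

private lemma key_sq {β p q : ℝ} (hβ : β < 0) (hp : 0 < p) (hpq : p ≤ q) :
    (p ^ β - q ^ β)^2 ≤ p ^ (2*β) - q ^ (2*β) := by
  have hq : 0 < q := hp.trans_le hpq
  have h1 : q ^ β ≤ p ^ β := Real.rpow_le_rpow_of_nonpos hp hpq hβ.le
  have h2 : 0 < q ^ β := Real.rpow_pos_of_pos hq β
  rw [← rpow_sq_eq hp, ← rpow_sq_eq hq]
  nlinarith

private lemma rpow_add_le' {x y p : ℝ} (hx : 0 ≤ x) (hy : 0 ≤ y) (hp : 0 ≤ p) (hp1 : p ≤ 1) :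
    (x + y) ^ p ≤ x ^ p + y ^ p := by
  have h := NNReal.rpow_add_le_add_rpow x.toNNReal y.toNNReal hp hp1
  rw [← Real.toNNReal_add hx hy] at h
  have h2 := NNReal.coe_le_coe.2 h
  rw [NNReal.coe_add, NNReal.coe_rpow, NNReal.coe_rpow, NNReal.coe_rpow,
    Real.coe_toNNReal _ (add_nonneg hx hy), Real.coe_toNNReal _ hx, Real.coe_toNNReal _ hy] at h2
  exact h2

private lemma ii_left {β : ℝ} (hβ : -1 < β) (s x y : ℝ) :
    IntervalIntegrable (fun r => (s - r) ^ β) volume x y := by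
  simpa using (intervalIntegrable_rpow' (a := s - x) (b := s - y) hβ).comp_sub_left s

private lemma ii_right {β : ℝ} (hβ : -1 < β) (s x y : ℝ) :
    IntervalIntegrable (fun r => (r - s) ^ β) volume x y := by
  simpa using (intervalIntegrable_rpow' (a := x - s) (b := y - s) hβ).comp_sub_right s

private lemma int_left {β : ℝ} (hβ : -1 < β) (s x y : ℝ) :
    ∫ r in x..y, (s - r) ^ β = ((s - x) ^ (β+1) - (s - y) ^ (β+1)) / (β+1) := by
  rw [intervalIntegral.integral_comp_sub_left (fun u => u ^ β) s, integral_rpow (Or.inl hβ)]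

private lemma int_right {β : ℝ} (hβ : -1 < β) (s x y : ℝ) :
    ∫ r in x..y, (r - s) ^ β = ((y - s) ^ (β+1) - (x - s) ^ (β+1)) / (β+1) := by
  rw [intervalIntegral.integral_comp_sub_right (fun u => u ^ β) s, integral_rpow (Or.inl hβ)]

private lemma piece_bound {F G : ℝ → ℝ} {x y : ℝ} (hxy : x ≤ y)
    (hFm : Measurable F) (hF0 : ∀ r, 0 ≤ F r)
    (hG : IntervalIntegrable G volume x y)
    (hle : ∀ r ∈ Set.Ioo x y, F r ≤ G r) :
    IntervalIntegrable F volume x y ∧ (∫ r in x..y, F r) ≤ ∫ r in x..y, G r := by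
  have hGi : IntegrableOn G (Set.Ioo x y) :=
    (intervalIntegrable_iff_integrableOn_Ioo_of_le hxy).1 hG
  have hFi : IntegrableOn F (Set.Ioo x y) := by
    refine Integrable.mono' hGi hFm.aestronglyMeasurable ?_
    filter_upwards [ae_restrict_mem measurableSet_Ioo] with r hr
    rw [Real.norm_eq_abs, abs_of_nonneg (hF0 r)]
    exact hle r hr
  refine ⟨(intervalIntegrable_iff_integrableOn_Ioo_of_le hxy).2 hFi, ?_⟩
  rw [intervalIntegral.integral_of_le hxy, intervalIntegral.integral_of_le hxy,
    MeasureTheory.integral_Ioc_eq_integral_Ioo, MeasureTheory.integral_Ioc_eq_integral_Ioo]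
  exact setIntegral_mono_on hFi hGi measurableSet_Ioo hle

private lemma meas_rpow_const (c : ℝ) : Measurable fun x : ℝ => x ^ c := by
  have h : (fun x : ℝ => x ^ c) = fun x =>
      if x = 0 then (if c = 0 then 1 else 0)
      else Real.exp (Real.log x * c) * (if x < 0 then Real.cos (c * Real.pi) else 1) := by
    funext x
    rcases lt_trichotomy x 0 with h|h|h
    · rw [if_neg h.ne, if_pos h, Real.rpow_def_of_neg h]
    · subst h
      rw [if_pos rfl]
      rcases eq_or_ne c 0 with hc|hc
      · rw [if_pos hc, hc, Real.rpow_zero]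
      · rw [if_neg hc, Real.zero_rpow hc]
    · rw [if_neg h.ne', if_neg (not_lt.2 h.le), Real.rpow_def_of_pos h, mul_one]
  rw [h]
  exact Measurable.ite (MeasurableSet.singleton 0) measurable_const
    ((Real.measurable_exp.comp (Real.measurable_log.mul_const c)).mul
      (Measurable.ite measurableSet_Iio measurable_const measurable_const))

private lemma posPow_pos {H x : ℝ} (hx : 0 < x) : posPow H x = x ^ (H - 1/2) := by
  unfold posPow; rw [if_pos hx]

private lemma posPow_np {H x : ℝ} (hx : x ≤ 0) : posPow H x = 0 := by
  unfold posPow; rw [if_neg (not_lt.2 hx)]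

private lemma meas_posPow (H : ℝ) : Measurable (posPow H) := by
  unfold posPow
  exact Measurable.ite measurableSet_Ioi (meas_rpow_const _) measurable_const

private lemma meas_gridEta (n : ℕ) : Measurable (gridEta n) := by
  unfold gridEta
  exact ((measurable_from_top.comp (Int.measurable_floor.comp
    (measurable_id.const_mul _)))).div_const _

private lemma meas_deltaSq (H : ℝ) (n : ℕ) (t : ℝ) :
    Measurable (fun r => (deltaSymK H n t r)^2) := by
  unfold deltaSymK symK' symK
  refine Measurable.pow_const ?_ 2
  refine Measurable.sub (Measurable.add ?_ ?_) ?_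
  · exact (meas_posPow H).comp (measurable_const.sub measurable_id)
  · exact (meas_posPow H).comp ((meas_gridEta n).sub measurable_const)
  · exact (meas_rpow_const _).comp ((measurable_const.sub measurable_id).abs)

/-- `∫₀¹ (ΔK̃(t,r))² dr ≤ C (n^(-2H) + ε(t)²)` uniformly in `n ≥ 1`, `t ∈ [0,1]`. -/
theorem deltaSymK_square_integral_bound (H : ℝ) (hH0 : 0 < H) (hH1 : H < 1/2) :
    ∃ C > 0, ∀ n : ℕ, 1 ≤ n → ∀ t ∈ Set.Icc (0 : ℝ) 1,
      (∫ r in (0 : ℝ)..1, (deltaSymK H n t r) ^ 2)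
        ≤ C * ((n : ℝ) ^ (-(2 * H)) + (epsFn H n t) ^ 2) := by
  have hα : H - 1/2 < 0 := by linarith
  have hA : -1 < 2*(H - 1/2) := by linarith
  have hAneg : 2*(H-1/2) < 0 := by linarith
  have hA1 : 2*(H-1/2)+1 = 2*H := by ring
  have h2H : (0:ℝ) < 2*H := by linarith
  refine ⟨2/H + 1, by positivity, ?_⟩
  intro n hn t ht
  obtain ⟨ht0, ht1⟩ := ht
  have hn0 : (0:ℝ) < (n:ℝ) := by exact_mod_cast hn
  have hnne : (n:ℝ) ≠ 0 := hn0.ne'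
  set κ : ℝ := 1/(n:ℝ) with hκdef
  have hκ0 : 0 < κ := by positivity
  have hκ1 : κ * n = 1 := by rw [hκdef]; field_simp
  set F : ℝ → ℝ := fun r => (deltaSymK H n t r)^2 with hF
  have hFm : Measurable F := meas_deltaSq H n t
  have hF0 : ∀ r, 0 ≤ F r := fun r => sq_nonneg _
  have hgr_le : ∀ r : ℝ, gridEta n r ≤ r := by
    intro r; unfold gridEta
    rw [div_le_iff₀ hn0, mul_comm]
    exact Int.floor_le _
  have hgr_gt : ∀ r : ℝ, r - κ < gridEta n r := by
    intro r; unfold gridEta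
    rw [lt_div_iff₀ hn0]
    have h := Int.sub_one_lt_floor ((n:ℝ)*r)
    have h2 : (r - κ) * n = n * r - 1 := by rw [hκdef]; field_simp
    linarith
  set a := gridEta n t with hadef
  have hat : a ≤ t := hgr_le t
  have hta : t - a < κ := by have := hgr_gt t; linarith
  have ha0 : 0 ≤ a := by
    rw [hadef]; unfold gridEta
    have h1 : (0:ℤ) ≤ ⌊(n:ℝ)*t⌋ := Int.floor_nonneg.2 (by positivity)
    have h2 : (0:ℝ) ≤ (⌊(n:ℝ)*t⌋:ℝ) := by exact_mod_cast h1
    positivity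
  set b := (⌈(n:ℝ)*t⌉ : ℝ)/n with hbdef
  have htb : t ≤ b := by
    rw [hbdef, le_div_iff₀ hn0, mul_comm]
    exact Int.le_ceil _
  have hb1 : b ≤ 1 := by
    rw [hbdef, div_le_one hn0]
    have h1 : (⌈(n:ℝ)*t⌉:ℤ) ≤ (n:ℤ) := Int.ceil_le.2 (by push_cast; nlinarith)
    exact_mod_cast h1
  have hbt : b - t ≤ κ := by
    have h := Int.ceil_lt_add_one ((n:ℝ)*t)
    rw [hbdef, sub_le_iff_le_add, div_le_iff₀ hn0]
    have h2 : (κ + t) * n = 1 + n*t := by rw [hκdef]; field_simp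
    linarith
  have hκpow : κ ^ (2*H) = (n:ℝ) ^ (-(2*H)) := by
    rw [hκdef, one_div, Real.inv_rpow hn0.le, ← Real.rpow_neg hn0.le]
  have hX0 : (0:ℝ) ≤ (n:ℝ) ^ (-(2*H)) := Real.rpow_nonneg hn0.le _
  by_cases hI : ∃ m : ℤ, (n:ℝ) * t = m
  · -- grid point case
    obtain ⟨m, hm⟩ := hI
    have heps : epsFn H n t = 0 := by unfold epsFn; rw [if_pos ⟨m, hm⟩]
    have hta' : a = t := by
      rw [hadef]; unfold gridEta
      rw [hm, Int.floor_intCast, eq_comm, eq_div_iff hnne]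
      linarith
    set c' := min (t + κ) 1 with hc'
    have htc : t ≤ c' := le_min (by linarith) ht1
    have hc1 : c' ≤ 1 := min_le_right _ _
    have hct : c' - t ≤ κ := by have := min_le_left (t+κ) 1; linarith
    -- piece 1 : [0,t]
    have ptw1 : ∀ r ∈ Set.Ioo (0:ℝ) t, F r ≤ (fun _ : ℝ => (0:ℝ)) r := by
      intro r hr
      have h1 : deltaSymK H n t r = 0 := by
        unfold deltaSymK symK' symK
        rw [← hadef, hta',
          posPow_pos (by linarith [hr.2] : (0:ℝ) < t - r),
          posPow_np (by linarith [hgr_le r, hr.2] : gridEta n r - t ≤ 0),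
          abs_of_pos (by linarith [hr.2] : (0:ℝ) < t - r)]
        ring
      simp only [hF, h1]
      norm_num
    have P1 := piece_bound ht0 hFm hF0 (intervalIntegrable_const (c := (0:ℝ))) ptw1
    -- piece 2 : [t,c']
    have ptw2 : ∀ r ∈ Set.Ioo t c', F r ≤ (r - t) ^ (2*(H-1/2)) := by
      intro r hr
      have hrt : 0 < r - t := by linarith [hr.1]
      have hgrid : gridEta n r = t := by
        unfold gridEta
        have hrc : r < t + κ := lt_of_lt_of_le hr.2 (min_le_left _ _)
        have h1 : ((m:ℤ):ℝ) ≤ (n:ℝ)*r := by push_cast; nlinarith [hr.1]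
        have h2 : (n:ℝ)*r < (m:ℤ) + 1 := by push_cast; nlinarith
        have h3 : ⌊(n:ℝ)*r⌋ = m := Int.floor_eq_iff.2 ⟨h1, by push_cast at h2 ⊢; linarith⟩
        rw [h3, eq_comm, eq_div_iff hnne]; linarith
      have hδ : deltaSymK H n t r = -((r - t)^(H-1/2)) := by
        unfold deltaSymK symK' symK
        rw [← hadef, hta', hgrid,
          posPow_np (by linarith : t - r ≤ 0),
          posPow_np (by linarith : t - t ≤ 0),
          abs_of_neg (by linarith : t - r < 0), neg_sub]
        ring
      have : F r = (r - t) ^ (2*(H-1/2)) := by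
        simp only [hF, hδ, neg_sq]
        exact rpow_sq_eq hrt _
      linarith
    have P2 := piece_bound htc hFm hF0 (ii_right hA t t c') ptw2
    -- piece 3 : [c',1]
    have ptw3 : ∀ r ∈ Set.Ioo c' 1,
        F r ≤ (r - (t+κ)) ^ (2*(H-1/2)) - (r - t) ^ (2*(H-1/2)) := by
      intro r hr
      have htκ1 : t + κ ≤ 1 := by
        by_contra hcon
        push_neg at hcon
        rw [min_eq_right hcon.le] at hc'
        rw [hc'] at hr
        exact absurd hr.1 (not_lt.2 hr.2.le)
      have hc'eq : c' = t + κ := min_eq_left htκ1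
      have hrtκ : 0 < r - (t + κ) := by rw [hc'eq] at hr; linarith [hr.1]
      have hp0 : 0 < gridEta n r - t := by linarith [hgr_gt r]
      have hple : gridEta n r - t ≤ r - t := by linarith [hgr_le r]
      have hplow : r - (t+κ) ≤ gridEta n r - t := by linarith [hgr_gt r]
      have hδ : deltaSymK H n t r = (gridEta n r - t)^(H-1/2) - (r - t)^(H-1/2) := by
        unfold deltaSymK symK' symK
        rw [← hadef, hta',
          posPow_np (by linarith : t - r ≤ 0),
          posPow_pos hp0,
          abs_of_neg (by linarith : t - r < 0), neg_sub]
        ring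
      have h1 : F r ≤ (gridEta n r - t)^(2*(H-1/2)) - (r-t)^(2*(H-1/2)) := by
        simp only [hF, hδ]
        exact key_sq hα hp0 hple
      have h2 : (gridEta n r - t)^(2*(H-1/2)) ≤ (r - (t+κ))^(2*(H-1/2)) :=
        Real.rpow_le_rpow_of_nonpos hrtκ hplow hAneg.le
      linarith
    have P3 := piece_bound hc1 hFm hF0
      ((ii_right hA (t+κ) c' 1).sub (ii_right hA t c' 1)) ptw3
    -- values
    have V1 : (∫ _ in (0:ℝ)..t, (0:ℝ)) = 0 := by simp
    have V2 : (∫ r in t..c', (r - t) ^ (2*(H-1/2))) = (c' - t)^(2*H) / (2*H) := by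
      rw [int_right hA t t c', hA1, sub_self, Real.zero_rpow h2H.ne', sub_zero]
    have V3 : (∫ r in c'..1, ((r - (t+κ)) ^ (2*(H-1/2)) - (r - t) ^ (2*(H-1/2))))
        = ((1 - (t+κ))^(2*H) - (c' - (t+κ))^(2*H)) / (2*H)
          - ((1 - t)^(2*H) - (c' - t)^(2*H)) / (2*H) := by
      rw [integral_sub (ii_right hA (t+κ) c' 1) (ii_right hA t c' 1),
        int_right hA (t+κ) c' 1, int_right hA t c' 1, hA1]
    -- bounds
    have B2 : (c' - t)^(2*H) ≤ κ^(2*H) :=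
      Real.rpow_le_rpow (by linarith) hct h2H.le
    have B3 : ((1 - (t+κ))^(2*H) - (c' - (t+κ))^(2*H))
          - ((1 - t)^(2*H) - (c' - t)^(2*H)) ≤ κ^(2*H) := by
      rcases le_or_gt (t + κ) 1 with hle1 | hgt1
      · have hc'eq : c' = t + κ := min_eq_left hle1
        rw [hc'eq]
        have e1 : (t + κ - (t+κ))^(2*H) = 0 := by
          rw [sub_self, Real.zero_rpow h2H.ne']
        have e2 : (t + κ - t)^(2*H) = κ^(2*H) := by norm_num
        have e3 : (1 - (t+κ))^(2*H) ≤ (1-t)^(2*H) :=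
          Real.rpow_le_rpow (by linarith) (by linarith) h2H.le
        rw [e1, e2]
        linarith
      · have hc'eq : c' = 1 := min_eq_right hgt1.le
        rw [hc'eq]
        have : (0:ℝ) ≤ κ^(2*H) := Real.rpow_nonneg hκ0.le _
        linarith
    -- assemble
    have e1 : (∫ r in (0:ℝ)..t, F r) + (∫ r in t..c', F r) = ∫ r in (0:ℝ)..c', F r :=
      integral_add_adjacent_intervals P1.1 P2.1
    have e2 : (∫ r in (0:ℝ)..c', F r) + (∫ r in c'..1, F r) = ∫ r in (0:ℝ)..1, F r :=
      integral_add_adjacent_intervals (P1.1.trans P2.1) P3.1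
    have hsum : (∫ r in (0:ℝ)..1, F r) ≤ κ^(2*H)/(2*H) + κ^(2*H)/(2*H) := by
      have b1 := P1.2
      have b2 := P2.2
      have b3 := P3.2
      rw [V1] at b1
      rw [V2] at b2
      rw [V3] at b3
      have b2' : (c' - t)^(2*H)/(2*H) ≤ κ^(2*H)/(2*H) := by gcongr
      have b3' : ((1 - (t+κ))^(2*H) - (c' - (t+κ))^(2*H)) / (2*H)
          - ((1 - t)^(2*H) - (c' - t)^(2*H)) / (2*H) ≤ κ^(2*H)/(2*H) := by
        rw [div_sub_div_same]
        gcongr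
      linarith
    rw [heps]
    have hfin : κ^(2*H)/(2*H) + κ^(2*H)/(2*H) ≤ (2/H + 1) * ((n:ℝ)^(-(2*H)) + 0^2) := by
      have hHne : H ≠ 0 := hH0.ne'
      have hk2 : (0:ℝ) ≤ κ^(2*H) := Real.rpow_nonneg hκ0.le _
      rw [← hκpow, show (0:ℝ)^2 = 0 by norm_num, add_zero]
      have h1 : κ^(2*H)/(2*H) + κ^(2*H)/(2*H) = κ^(2*H)/H := by
        field_simp
        ring
      have h2 : 0 ≤ κ^(2*H)/H := div_nonneg hk2 hH0.le
      have h3 : (2/H + 1) * κ^(2*H) = κ^(2*H)/H + (κ^(2*H)/H + κ^(2*H)) := by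
        field_simp
        ring
      rw [h1, h3]
      linarith
    calc (∫ r in (0:ℝ)..1, F r) ≤ κ^(2*H)/(2*H) + κ^(2*H)/(2*H) := hsum
      _ ≤ (2/H + 1) * ((n:ℝ)^(-(2*H)) + 0^2) := hfin
  · -- non grid point case
    have hfr : (⌊(n:ℝ)*t⌋:ℝ) < (n:ℝ)*t :=
      lt_of_le_of_ne (Int.floor_le _) (fun h => hI ⟨⌊(n:ℝ)*t⌋, h.symm⟩)
    have hceil : (⌈(n:ℝ)*t⌉:ℤ) = ⌊(n:ℝ)*t⌋ + 1 := by
      have h1 : (⌈(n:ℝ)*t⌉:ℤ) ≤ ⌊(n:ℝ)*t⌋ + 1 :=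
        Int.ceil_le.2 (by push_cast; linarith [Int.lt_floor_add_one ((n:ℝ)*t)])
      have h2 : ⌊(n:ℝ)*t⌋ < ⌈(n:ℝ)*t⌉ := Int.lt_ceil.2 hfr
      omega
    have hts : t < b := by
      have h : (n:ℝ)*t < (⌈(n:ℝ)*t⌉:ℝ) := by
        rcases lt_or_eq_of_le (Int.le_ceil ((n:ℝ)*t)) with h|h
        · exact h
        · exact absurd ⟨⌈(n:ℝ)*t⌉, h⟩ hI
      rw [hbdef, lt_div_iff₀ hn0, mul_comm]
      exact h
    have hbt0 : 0 < b - t := by linarith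
    have hat' : a < t := by
      rw [hadef]; unfold gridEta; rw [div_lt_iff₀ hn0, mul_comm t (n:ℝ)]; exact hfr
    have heps2 : (epsFn H n t)^2 = κ * (b - t)^(2*(H-1/2)) := by
      unfold epsFn
      rw [if_neg hI, ← hbdef, mul_pow, rpow_sq_eq hn0, rpow_sq_eq hbt0,
        show (2*(-(1/2):ℝ)) = -1 by norm_num, Real.rpow_neg_one, hκdef]
      norm_num
    set c' := min (b + κ) 1 with hc'
    have hbc : b ≤ c' := le_min (by linarith) hb1
    have hc1 : c' ≤ 1 := min_le_right _ _
    have hcb : c' - b ≤ κ := by have := min_le_left (b+κ) 1; linarith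
    -- piece 1 : [0,a]
    have ptw1 : ∀ r ∈ Set.Ioo (0:ℝ) a,
        F r ≤ (a - r)^(2*(H-1/2)) - (t - r)^(2*(H-1/2)) := by
      intro r hr
      have har : 0 < a - r := by linarith [hr.2]
      have hδ : deltaSymK H n t r = (a - r)^(H-1/2) - (t - r)^(H-1/2) := by
        unfold deltaSymK symK' symK
        rw [← hadef, posPow_pos har,
          posPow_np (by linarith [hgr_le r, hr.2] : gridEta n r - t ≤ 0),
          abs_of_pos (by linarith [hr.2] : (0:ℝ) < t - r)]
        ring
      simp only [hF, hδ]
      exact key_sq hα har (by linarith)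
    have P1 := piece_bound ha0 hFm hF0 ((ii_left hA a 0 a).sub (ii_left hA t 0 a)) ptw1
    -- piece 2 : [a,t]
    have ptw2 : ∀ r ∈ Set.Ioo a t, F r ≤ (t - r)^(2*(H-1/2)) := by
      intro r hr
      have htr : 0 < t - r := by linarith [hr.2]
      have hδ : deltaSymK H n t r = -((t - r)^(H-1/2)) := by
        unfold deltaSymK symK' symK
        rw [← hadef, posPow_np (by linarith [hr.1] : a - r ≤ 0),
          posPow_np (by linarith [hgr_le r, hr.2] : gridEta n r - t ≤ 0),
          abs_of_pos htr]
        ring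
      have : F r = (t - r)^(2*(H-1/2)) := by
        simp only [hF, hδ, neg_sq]; exact rpow_sq_eq htr _
      linarith
    have P2 := piece_bound hat'.le hFm hF0 (ii_left hA t a t) ptw2
    -- piece 3 : [t,b]
    have hnb : (n:ℝ)*b = (⌈(n:ℝ)*t⌉:ℝ) := by rw [hbdef]; field_simp
    have ptw3 : ∀ r ∈ Set.Ioo t b, F r ≤ (r - t)^(2*(H-1/2)) := by
      intro r hr
      have hrt : 0 < r - t := by linarith [hr.1]
      have hgrd : gridEta n r - t ≤ 0 := by
        have h1 : (n:ℝ)*r < (⌈(n:ℝ)*t⌉:ℝ) := by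
          nlinarith [mul_lt_mul_of_pos_left hr.2 hn0]
        have h2 : ⌊(n:ℝ)*r⌋ < ⌈(n:ℝ)*t⌉ := Int.floor_lt.2 h1
        have h3 : ⌊(n:ℝ)*r⌋ ≤ ⌊(n:ℝ)*t⌋ := by omega
        have h4 : (⌊(n:ℝ)*r⌋:ℝ) ≤ (⌊(n:ℝ)*t⌋:ℝ) := by exact_mod_cast h3
        unfold gridEta
        have h5 : (⌊(n:ℝ)*r⌋:ℝ)/n ≤ (⌊(n:ℝ)*t⌋:ℝ)/n := by gcongr
        have h6 : a = (⌊(n:ℝ)*t⌋:ℝ)/n := by rw [hadef]; rfl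
        linarith [hat']
      have hδ : deltaSymK H n t r = -((r - t)^(H-1/2)) := by
        unfold deltaSymK symK' symK
        rw [← hadef, posPow_np (by linarith [hr.1] : a - r ≤ 0),
          posPow_np hgrd, abs_of_neg (by linarith : t - r < 0), neg_sub]
        ring
      have : F r = (r - t)^(2*(H-1/2)) := by
        simp only [hF, hδ, neg_sq]; exact rpow_sq_eq hrt _
      linarith
    have P3 := piece_bound hts.le hFm hF0 (ii_right hA t t b) ptw3
    -- piece 4 : [b,c']
    have ptw4 : ∀ r ∈ Set.Ioo b c', F r ≤ (fun _ : ℝ => (b - t)^(2*(H-1/2))) r := by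
      intro r hr
      have hbr : b < r := hr.1
      have hgrid : gridEta n r = b := by
        unfold gridEta
        have h1 : (⌈(n:ℝ)*t⌉:ℝ) ≤ (n:ℝ)*r := by
          nlinarith [mul_lt_mul_of_pos_left hbr hn0]
        have h2 : (n:ℝ)*r < (⌈(n:ℝ)*t⌉:ℝ) + 1 := by
          have hrc : r < b + κ := lt_of_lt_of_le hr.2 (min_le_left _ _)
          have h2a := mul_lt_mul_of_pos_left hrc hn0
          have hnκ : (n:ℝ)*κ = 1 := by rw [hκdef]; field_simp
          nlinarith
        have h3 : ⌊(n:ℝ)*r⌋ = ⌈(n:ℝ)*t⌉ := Int.floor_eq_iff.2 ⟨h1, by push_cast; linarith⟩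
        rw [h3, ← hbdef]
      have hrt : b - t < r - t := by linarith
      have hδ : deltaSymK H n t r = (b - t)^(H-1/2) - (r - t)^(H-1/2) := by
        unfold deltaSymK symK' symK
        rw [← hadef, hgrid, posPow_np (by linarith : a - r ≤ 0), posPow_pos hbt0,
          abs_of_neg (by linarith : t - r < 0), neg_sub]
        ring
      have hY : 0 < (r - t)^(H-1/2) := Real.rpow_pos_of_pos (by linarith) _
      have hXY : (r - t)^(H-1/2) ≤ (b - t)^(H-1/2) :=
        Real.rpow_le_rpow_of_nonpos hbt0 hrt.le hα.le
      have h4 : F r ≤ ((b - t)^(H-1/2))^2 := by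
        simp only [hF, hδ]; nlinarith
      calc F r ≤ ((b - t)^(H-1/2))^2 := h4
        _ = (b - t)^(2*(H-1/2)) := rpow_sq_eq hbt0 _
    have P4 := piece_bound hbc hFm hF0
      (intervalIntegrable_const (c := (b - t)^(2*(H-1/2)))) ptw4
    -- piece 5 : [c',1]
    have ptw5 : ∀ r ∈ Set.Ioo c' 1,
        F r ≤ (r - (t+κ))^(2*(H-1/2)) - (r - t)^(2*(H-1/2)) := by
      intro r hr
      have hbκ1 : b + κ ≤ 1 := by
        by_contra hcon
        push_neg at hcon
        rw [min_eq_right hcon.le] at hc'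
        rw [hc'] at hr
        exact absurd hr.1 (not_lt.2 hr.2.le)
      have hc'eq : c' = b + κ := min_eq_left hbκ1
      have hrtκ : 0 < r - (t + κ) := by rw [hc'eq] at hr; linarith [hr.1]
      have hp0 : 0 < gridEta n r - t := by linarith [hgr_gt r]
      have hple : gridEta n r - t ≤ r - t := by linarith [hgr_le r]
      have hplow : r - (t+κ) ≤ gridEta n r - t := by linarith [hgr_gt r]
      have hδ : deltaSymK H n t r = (gridEta n r - t)^(H-1/2) - (r - t)^(H-1/2) := by
        unfold deltaSymK symK' symK
        rw [← hadef, posPow_np (by linarith : a - r ≤ 0), posPow_pos hp0,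
          abs_of_neg (by linarith : t - r < 0), neg_sub]
        ring
      have h1 : F r ≤ (gridEta n r - t)^(2*(H-1/2)) - (r-t)^(2*(H-1/2)) := by
        simp only [hF, hδ]; exact key_sq hα hp0 hple
      have h2 : (gridEta n r - t)^(2*(H-1/2)) ≤ (r - (t+κ))^(2*(H-1/2)) :=
        Real.rpow_le_rpow_of_nonpos hrtκ hplow hAneg.le
      linarith
    have P5 := piece_bound hc1 hFm hF0
      ((ii_right hA (t+κ) c' 1).sub (ii_right hA t c' 1)) ptw5
    -- values
    have V1 : (∫ r in (0:ℝ)..a, ((a - r)^(2*(H-1/2)) - (t - r)^(2*(H-1/2))))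
        = ((a-0)^(2*H) - (a-a)^(2*H))/(2*H) - ((t-0)^(2*H) - (t-a)^(2*H))/(2*H) := by
      rw [integral_sub (ii_left hA a 0 a) (ii_left hA t 0 a),
        int_left hA a 0 a, int_left hA t 0 a, hA1]
    have V2 : (∫ r in a..t, (t - r)^(2*(H-1/2))) = (t-a)^(2*H)/(2*H) := by
      rw [int_left hA t a t, hA1, sub_self, Real.zero_rpow h2H.ne', sub_zero]
    have V3 : (∫ r in t..b, (r - t)^(2*(H-1/2))) = (b-t)^(2*H)/(2*H) := by
      rw [int_right hA t t b, hA1, sub_self, Real.zero_rpow h2H.ne', sub_zero]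
    have V4 : (∫ _ in b..c', (b - t)^(2*(H-1/2))) = (c' - b) * (b-t)^(2*(H-1/2)) := by
      rw [intervalIntegral.integral_const, smul_eq_mul]
    have V5 : (∫ r in c'..1, ((r - (t+κ)) ^ (2*(H-1/2)) - (r - t) ^ (2*(H-1/2))))
        = ((1 - (t+κ))^(2*H) - (c' - (t+κ))^(2*H)) / (2*H)
          - ((1 - t)^(2*H) - (c' - t)^(2*H)) / (2*H) := by
      rw [integral_sub (ii_right hA (t+κ) c' 1) (ii_right hA t c' 1),
        int_right hA (t+κ) c' 1, int_right hA t c' 1, hA1]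
    -- numerator bounds
    have hta2H : (t-a)^(2*H) ≤ κ^(2*H) :=
      Real.rpow_le_rpow (by linarith) hta.le h2H.le
    have hbt2H : (b-t)^(2*H) ≤ κ^(2*H) :=
      Real.rpow_le_rpow (by linarith) hbt h2H.le
    have B1 : ((a-0)^(2*H) - (a-a)^(2*H)) - ((t-0)^(2*H) - (t-a)^(2*H)) ≤ κ^(2*H) := by
      have e0 : (a-a)^(2*H) = 0 := by rw [sub_self, Real.zero_rpow h2H.ne']
      have e1 : (a-0)^(2*H) ≤ (t-0)^(2*H) := by
        rw [sub_zero, sub_zero]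
        exact Real.rpow_le_rpow ha0 hat h2H.le
      linarith
    have B4 : (c' - b) * (b-t)^(2*(H-1/2)) ≤ κ * (b-t)^(2*(H-1/2)) :=
      mul_le_mul_of_nonneg_right hcb (Real.rpow_nonneg hbt0.le _)
    have B5 : ((1 - (t+κ))^(2*H) - (c' - (t+κ))^(2*H))
          - ((1 - t)^(2*H) - (c' - t)^(2*H)) ≤ κ^(2*H) := by
      rcases le_or_gt (b + κ) 1 with hle1 | hgt1
      · have hc'eq : c' = b + κ := min_eq_left hle1
        have e0 : c' - (t+κ) = b - t := by rw [hc'eq]; ring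
        have e0' : c' - t = (b-t) + κ := by rw [hc'eq]; ring
        have e3 : (1 - (t+κ))^(2*H) ≤ (1-t)^(2*H) :=
          Real.rpow_le_rpow (by linarith) (by linarith) h2H.le
        have e4 : ((b-t) + κ)^(2*H) ≤ (b-t)^(2*H) + κ^(2*H) :=
          rpow_add_le' hbt0.le hκ0.le h2H.le (by linarith)
        rw [e0, e0']
        linarith
      · have hc'eq : c' = 1 := min_eq_right hgt1.le
        have hk2 : (0:ℝ) ≤ κ^(2*H) := Real.rpow_nonneg hκ0.le _
        rw [hc'eq]
        linarith
    -- assemble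
    have e1 : (∫ r in (0:ℝ)..a, F r) + (∫ r in a..t, F r) = ∫ r in (0:ℝ)..t, F r :=
      integral_add_adjacent_intervals P1.1 P2.1
    have e2 : (∫ r in (0:ℝ)..t, F r) + (∫ r in t..b, F r) = ∫ r in (0:ℝ)..b, F r :=
      integral_add_adjacent_intervals (P1.1.trans P2.1) P3.1
    have e3 : (∫ r in (0:ℝ)..b, F r) + (∫ r in b..c', F r) = ∫ r in (0:ℝ)..c', F r :=
      integral_add_adjacent_intervals ((P1.1.trans P2.1).trans P3.1) P4.1
    have e4 : (∫ r in (0:ℝ)..c', F r) + (∫ r in c'..1, F r) = ∫ r in (0:ℝ)..1, F r :=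
      integral_add_adjacent_intervals (((P1.1.trans P2.1).trans P3.1).trans P4.1) P5.1
    have b1 := P1.2; rw [V1] at b1
    have b2 := P2.2; rw [V2] at b2
    have b3 := P3.2; rw [V3] at b3
    have b4 := P4.2; rw [V4] at b4
    have b5 := P5.2; rw [V5] at b5
    have b1' : (∫ r in (0:ℝ)..a, F r) ≤ κ^(2*H)/(2*H) := by
      rw [div_sub_div_same] at b1
      calc (∫ r in (0:ℝ)..a, F r) ≤ _ := b1
        _ ≤ κ^(2*H)/(2*H) := by gcongr
    have b2' : (∫ r in a..t, F r) ≤ κ^(2*H)/(2*H) := by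
      calc (∫ r in a..t, F r) ≤ _ := b2
        _ ≤ κ^(2*H)/(2*H) := by gcongr
    have b3' : (∫ r in t..b, F r) ≤ κ^(2*H)/(2*H) := by
      calc (∫ r in t..b, F r) ≤ _ := b3
        _ ≤ κ^(2*H)/(2*H) := by gcongr
    have b4' : (∫ r in b..c', F r) ≤ κ * (b-t)^(2*(H-1/2)) := le_trans b4 B4
    have b5' : (∫ r in c'..1, F r) ≤ κ^(2*H)/(2*H) := by
      rw [div_sub_div_same] at b5
      calc (∫ r in c'..1, F r) ≤ _ := b5
        _ ≤ κ^(2*H)/(2*H) := by gcongr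
    have hsum : (∫ r in (0:ℝ)..1, F r)
        ≤ κ^(2*H)/(2*H)*4 + κ * (b-t)^(2*(H-1/2)) := by linarith
    rw [heps2]
    have hHne : H ≠ 0 := hH0.ne'
    have hk2 : (0:ℝ) ≤ κ^(2*H) := Real.rpow_nonneg hκ0.le _
    have hE0 : 0 ≤ κ * (b-t)^(2*(H-1/2)) :=
      mul_nonneg hκ0.le (Real.rpow_nonneg hbt0.le _)
    have hfin : κ^(2*H)/(2*H)*4 + κ * (b-t)^(2*(H-1/2))
        ≤ (2/H + 1) * ((n:ℝ)^(-(2*H)) + κ * (b-t)^(2*(H-1/2))) := by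
      rw [← hκpow]
      set E := κ * (b-t)^(2*(H-1/2)) with hE
      have h1 : κ^(2*H)/(2*H)*4 = 2*(κ^(2*H)/H) := by
        field_simp
        ring
      have h2 : (2/H+1)*(κ^(2*H) + E) - (2*(κ^(2*H)/H) + E) = κ^(2*H) + 2*(E/H) := by
        field_simp
        ring
      have h3 : 0 ≤ E/H := div_nonneg hE0 hH0.le
      linarith
    linarith
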